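/- arXiv:1007.3578 — 2 statements merged into one kernel-verified Lean document; each statement's English description precedes it below -/
import Mathlib

section
/- Let L : ℝ^d → ℝ₊ be continuously differentiable with ∇L Lipschitz with constant [∇L]_Lip and |∇L|² ≤ C(1+L). Define Λ(θ) := √(1+L(θ)). Then there exists a constant C_L > 0 such that for all θ, θ' ∈ ℝ^d, |∇Λ(θ') − ∇Λ(θ)| ≤ C_L |θ'−θ| / Λ(θ). -/
open Real

/-- If `L : ℝ^d → ℝ₊` is `C¹` with Lipschitz gradient and `‖∇L‖² ≤ C(1+L)`, then the
gradient of `Λ = √(1+L)` satisfies `‖∇Λ(θ') − ∇Λ(θ)‖ ≤ C_L ‖θ'−θ‖ / Λ(θ)`. -/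
theorem stmt_1 (d : ℕ) (L : EuclideanSpace ℝ (Fin d) → ℝ)
    (hLpos : ∀ θ, 0 ≤ L θ) (hL : ContDiff ℝ 1 L)
    (K : NNReal) (hLip : LipschitzWith K (gradient L))
    (C : ℝ) (hC : 0 < C) (hgrowth : ∀ θ, ‖gradient L θ‖ ^ 2 ≤ C * (1 + L θ)) :
    ∃ C_L : ℝ, 0 < C_L ∧ ∀ θ θ' : EuclideanSpace ℝ (Fin d),
      ‖gradient (fun x => Real.sqrt (1 + L x)) θ' -
          gradient (fun x => Real.sqrt (1 + L x)) θ‖ ≤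
        C_L * ‖θ' - θ‖ / Real.sqrt (1 + L θ) := by
  classical
  have hLd : Differentiable ℝ L := hL.differentiable one_ne_zero
  set s : EuclideanSpace ℝ (Fin d) → ℝ := fun θ => Real.sqrt (1 + L θ) with hsdef
  have h1L : ∀ θ, (0:ℝ) < 1 + L θ := fun θ => by linarith [hLpos θ]
  have hs1 : ∀ θ, (1:ℝ) ≤ s θ := fun θ => by
    rw [show (1:ℝ) = Real.sqrt 1 by simp]
    exact Real.sqrt_le_sqrt (by linarith [hLpos θ])
  have hspos : ∀ θ, (0:ℝ) < s θ := fun θ => lt_of_lt_of_le one_pos (hs1 θ)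
  have hssq : ∀ θ, s θ ^ 2 = 1 + L θ := fun θ => Real.sq_sqrt (h1L θ).le
  -- gradient formula for Λ = √(1+L)
  have hgrad : ∀ θ, HasGradientAt (fun x => Real.sqrt (1 + L x))
      ((2 * s θ)⁻¹ • gradient L θ) θ := by
    intro θ
    have h1 : HasGradientAt (fun x => 1 + L x) (gradient L θ) θ := by
      have := (hLd θ).hasGradientAt
      rw [hasGradientAt_iff_hasFDerivAt] at this ⊢
      exact this.const_add 1
    have hsq : HasDerivAt Real.sqrt (1 / (2 * Real.sqrt (1 + L θ))) (1 + L θ) :=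
      Real.hasDerivAt_sqrt (h1L θ).ne'
    rw [hasGradientAt_iff_hasFDerivAt] at h1 ⊢
    have := hsq.comp_hasFDerivAt θ h1
    rw [one_div] at this
    rw [map_smul]
    exact this
  have hgradeq : ∀ θ, gradient (fun x => Real.sqrt (1 + L x)) θ
      = (2 * s θ)⁻¹ • gradient L θ := fun θ => (hgrad θ).gradient
  -- bound on ‖∇L‖
  have hgb : ∀ θ, ‖gradient L θ‖ ≤ Real.sqrt C * s θ := by
    intro θ
    have : ‖gradient L θ‖ = Real.sqrt (‖gradient L θ‖ ^ 2) :=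
      (Real.sqrt_sq (norm_nonneg _)).symm
    rw [this, hsdef]
    rw [← Real.sqrt_mul hC.le]
    exact Real.sqrt_le_sqrt (hgrowth θ)
  -- Λ is (√C/2)-Lipschitz
  have hsLip : ∀ θ θ' : EuclideanSpace ℝ (Fin d), |s θ' - s θ| ≤ Real.sqrt C / 2 * ‖θ' - θ‖ := by
    intro θ θ'
    have key := Convex.norm_image_sub_le_of_norm_hasFDerivWithin_le
      (f := fun x => Real.sqrt (1 + L x))
      (f' := fun θ => InnerProductSpace.toDual ℝ (EuclideanSpace ℝ (Fin d)) ((2 * s θ)⁻¹ • gradient L θ))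
      (s := (Set.univ : Set (EuclideanSpace ℝ (Fin d)))) (C := Real.sqrt C / 2)
      (fun x _ => ((hgrad x).hasFDerivAt).hasFDerivWithinAt)
      (fun x _ => by
        rw [LinearIsometryEquiv.norm_map, norm_smul, norm_inv]
        have hsx := hspos x
        have h2s : (0:ℝ) < 2 * s x := mul_pos two_pos hsx
        rw [Real.norm_eq_abs, abs_of_pos h2s]
        calc (2 * s x)⁻¹ * ‖gradient L x‖
            ≤ (2 * s x)⁻¹ * (Real.sqrt C * s x) := by
              exact mul_le_mul_of_nonneg_left (hgb x) (inv_nonneg.2 h2s.le)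
          _ = Real.sqrt C / 2 := by field_simp)
      convex_univ (Set.mem_univ θ) (Set.mem_univ θ')
    rw [← Real.norm_eq_abs]
    exact key
  refine ⟨(K : ℝ) / 2 + C / 4 + 1, by positivity, fun θ θ' => ?_⟩
  rw [hgradeq, hgradeq]
  have hdecomp : (2 * s θ')⁻¹ • gradient L θ' - (2 * s θ)⁻¹ • gradient L θ
      = (2 * s θ)⁻¹ • (gradient L θ' - gradient L θ)
        + ((2 * s θ')⁻¹ - (2 * s θ)⁻¹) • gradient L θ' := by
    rw [smul_sub, sub_smul]; abel
  rw [hdecomp]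
  have hsθ := hspos θ
  have hsθ' := hspos θ'
  have hLipb : ‖gradient L θ' - gradient L θ‖ ≤ (K : ℝ) * ‖θ' - θ‖ := by
    have := hLip.dist_le_mul θ' θ
    rwa [dist_eq_norm, dist_eq_norm] at this
  have t1 : ‖(2 * s θ)⁻¹ • (gradient L θ' - gradient L θ)‖
      ≤ (K : ℝ) / 2 * ‖θ' - θ‖ / s θ := by
    rw [norm_smul, norm_inv, Real.norm_eq_abs, abs_of_pos (mul_pos two_pos hsθ)]
    calc (2 * s θ)⁻¹ * ‖gradient L θ' - gradient L θ‖
        ≤ (2 * s θ)⁻¹ * ((K : ℝ) * ‖θ' - θ‖) :=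
          mul_le_mul_of_nonneg_left hLipb (inv_nonneg.2 (mul_pos two_pos hsθ).le)
      _ = (K : ℝ) / 2 * ‖θ' - θ‖ / s θ := by field_simp
  have t2 : ‖((2 * s θ')⁻¹ - (2 * s θ)⁻¹) • gradient L θ'‖
      ≤ C / 4 * ‖θ' - θ‖ / s θ := by
    rw [norm_smul, Real.norm_eq_abs]
    have hinv : (2 * s θ')⁻¹ - (2 * s θ)⁻¹ = (s θ - s θ') / (2 * s θ * s θ') := by
      field_simp
    rw [hinv, abs_div, abs_of_pos (mul_pos (mul_pos two_pos hsθ) hsθ')]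
    have habs : |s θ - s θ'| ≤ Real.sqrt C / 2 * ‖θ' - θ‖ := by
      rw [abs_sub_comm]; exact hsLip θ θ'
    calc |s θ - s θ'| / (2 * s θ * s θ') * ‖gradient L θ'‖
        ≤ (Real.sqrt C / 2 * ‖θ' - θ‖) / (2 * s θ * s θ') * (Real.sqrt C * s θ') := by
          exact mul_le_mul ((div_le_div_iff_of_pos_right (mul_pos (mul_pos two_pos hsθ) hsθ')).2 habs)
            (hgb θ') (norm_nonneg _)
            (div_nonneg (by positivity) (mul_pos (mul_pos two_pos hsθ) hsθ').le)
      _ = C / 4 * ‖θ' - θ‖ / s θ := by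
          have hss : Real.sqrt C * Real.sqrt C = C := Real.mul_self_sqrt hC.le
          field_simp
          linear_combination (4 * ‖θ' - θ‖) * hss
  calc ‖(2 * s θ)⁻¹ • (gradient L θ' - gradient L θ)
        + ((2 * s θ')⁻¹ - (2 * s θ)⁻¹) • gradient L θ'‖
      ≤ ‖(2 * s θ)⁻¹ • (gradient L θ' - gradient L θ)‖
        + ‖((2 * s θ')⁻¹ - (2 * s θ)⁻¹) • gradient L θ'‖ := norm_add_le _ _
    _ ≤ (K : ℝ) / 2 * ‖θ' - θ‖ / s θ + C / 4 * ‖θ' - θ‖ / s θ := add_le_add t1 t2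
    _ ≤ ((K : ℝ) / 2 + C / 4 + 1) * ‖θ' - θ‖ / s θ := by
        rw [← add_div, ← add_mul]
        refine div_le_div_of_nonneg_right ?_ ?_ |>.trans_eq rfl
        · nlinarith [norm_nonneg (θ' - θ)]
        · exact hsθ.le
end

section
/- Let Y ∈ L¹(P) with continuous strictly increasing distribution function F_Y and α ∈ (0,1). Then V(θ) := θ + (1/(1−α))E[(Y−θ)₊] is differentiable with V′(θ) = 1 − (1/(1−α))·P(Y ≥ θ) = E[H(θ,Y)] where H(θ,y) := 1 − (1/(1−α))·1_{y≥θ}, and the unique minimizer of V is θ* = VaR_α(Y), the unique solution of F_Y(θ) = α. -/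
open MeasureTheory
open Set Filter Topology

/-- If `F_Y` is continuous and strictly increasing, the Rockafellar–Uryasev function is
differentiable with `V'(θ) = 1 - (1-α)⁻¹ P(Y ≥ θ) = E[H(θ,Y)]`, and its unique minimizer
is `θ* = VaR_α(Y)`, the unique solution of `F_Y(θ) = α`. -/
theorem stmt_13 {Ω : Type*} [MeasurableSpace Ω] (μ : Measure Ω) [IsProbabilityMeasure μ]
    (Y : Ω → ℝ) (hYmeas : Measurable Y) (hYint : Integrable Y μ)
    (F : ℝ → ℝ) (hF : ∀ x, F x = (μ {ω | Y ω ≤ x}).toReal)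
    (hFcont : Continuous F) (hFmono : StrictMono F)
    (α : ℝ) (hα : α ∈ Set.Ioo (0 : ℝ) 1)
    (V : ℝ → ℝ)
    (hV : ∀ θ, V θ = θ + (1 - α)⁻¹ * ∫ ω, max (Y ω - θ) 0 ∂μ)
    (H : ℝ → ℝ → ℝ)
    (hH : ∀ θ y, H θ y = 1 - (1 - α)⁻¹ * (if θ ≤ y then (1 : ℝ) else 0))
    (θstar : ℝ) (hθstar : θstar = sInf {θ : ℝ | α ≤ F θ}) :
    (∀ θ, HasDerivAt V (1 - (1 - α)⁻¹ * (μ {ω | θ ≤ Y ω}).toReal) θ) ∧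
      (∀ θ, 1 - (1 - α)⁻¹ * (μ {ω | θ ≤ Y ω}).toReal = ∫ ω, H θ (Y ω) ∂μ) ∧
      F θstar = α ∧ (∀ θ, F θ = α → θ = θstar) ∧
      (∀ θ, V θstar ≤ V θ) ∧ (∀ θ, V θ = V θstar → θ = θstar) := by
  obtain ⟨hα0, hα1⟩ := hα
  have hc : (0:ℝ) < (1 - α)⁻¹ := inv_pos.2 (by linarith)
  -- measurability of level sets
  have mle : ∀ x : ℝ, MeasurableSet {ω | Y ω ≤ x} := fun x =>
    hYmeas measurableSet_Iic
  have mlt : ∀ x : ℝ, MeasurableSet {ω | Y ω < x} := fun x =>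
    hYmeas measurableSet_Iio
  have mge : ∀ x : ℝ, MeasurableSet {ω | x ≤ Y ω} := fun x =>
    hYmeas measurableSet_Ici
  have mgt : ∀ x : ℝ, MeasurableSet {ω | x < Y ω} := fun x =>
    hYmeas measurableSet_Ioi
  -- μ {Y < x}.toReal = F x
  have hFlt : ∀ x : ℝ, (μ {ω | Y ω < x}).toReal = F x := by
    intro x
    set s : ℕ → Set Ω := fun n => {ω | Y ω ≤ x - 1/(n+1)} with hs
    have hmono : Monotone s := by
      intro m n hmn ω (h : Y ω ≤ _)
      refine h.trans (by
        have : (1:ℝ)/(n+1) ≤ 1/(m+1) := by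
          apply one_div_le_one_div_of_le (by positivity) (by exact_mod_cast by omega)
        linarith)
    have hUnion : (⋃ n, s n) = {ω | Y ω < x} := by
      ext ω
      simp only [mem_iUnion, mem_setOf_eq, hs]
      constructor
      · rintro ⟨n, hn⟩
        have : (0:ℝ) < 1/(n+1) := by positivity
        linarith
      · intro h
        obtain ⟨n, hn⟩ := exists_nat_one_div_lt (sub_pos.2 h)
        exact ⟨n, by linarith⟩
    have h1 : Tendsto (fun n => μ (s n)) atTop (𝓝 (μ {ω | Y ω < x})) := by
      have := tendsto_measure_iUnion_atTop (μ := μ) hmono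
      rwa [hUnion] at this
    have h2 : Tendsto (fun n => (μ (s n)).toReal) atTop
        (𝓝 ((μ {ω | Y ω < x}).toReal)) :=
      (ENNReal.tendsto_toReal (measure_ne_top _ _)).comp h1
    have h3 : Tendsto (fun n : ℕ => F (x - 1/(n+1))) atTop (𝓝 (F x)) := by
      apply hFcont.continuousAt.tendsto.comp
      have : Tendsto (fun n : ℕ => (1:ℝ)/(n+1)) atTop (𝓝 0) :=
        tendsto_one_div_add_atTop_nhds_zero_nat
      have := (tendsto_const_nhds (x := x)).sub this
      simpa using this
    have heq : ∀ n : ℕ, (μ (s n)).toReal = F (x - 1/(n+1)) := fun n => (hF _).symm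
    rw [show (fun n => (μ (s n)).toReal) = (fun n : ℕ => F (x - 1/(n+1))) from funext heq] at h2
    exact tendsto_nhds_unique h2 h3
  -- point masses vanish
  have hpt : ∀ x : ℝ, μ {ω | Y ω = x} = 0 := by
    intro x
    have hsub : {ω | Y ω = x} = {ω | Y ω ≤ x} \ {ω | Y ω < x} := by
      ext ω; simp only [mem_setOf_eq, mem_diff, not_lt]
      constructor
      · rintro rfl; exact ⟨le_rfl, le_rfl⟩
      · rintro ⟨h1, h2⟩; exact le_antisymm h1 h2
    rw [hsub, measure_diff (s₁ := {ω | Y ω ≤ x}) (s₂ := {ω | Y ω < x})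
      (fun ω (h : Y ω < x) => le_of_lt h) (mlt x).nullMeasurableSet (measure_ne_top _ _)]
    have : (μ {ω | Y ω < x}) = (μ {ω | Y ω ≤ x}) := by
      have h1 : (μ {ω | Y ω < x}).toReal = (μ {ω | Y ω ≤ x}).toReal := by
        rw [hFlt, hF]
      exact (ENNReal.toReal_eq_toReal_iff' (measure_ne_top _ _) (measure_ne_top _ _)).1 h1
    rw [this, tsub_self]
  have hge : ∀ x : ℝ, (μ {ω | x ≤ Y ω}).toReal = 1 - F x := by
    intro x
    have : {ω | x ≤ Y ω} = {ω | Y ω < x}ᶜ := by ext ω; simp [not_lt]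
    rw [this, prob_compl_eq_one_sub (mlt x),
      ENNReal.toReal_sub_of_le prob_le_one ENNReal.one_ne_top, hFlt]
    simp
  have hgt : ∀ x : ℝ, (μ {ω | x < Y ω}).toReal = 1 - F x := by
    intro x
    have : {ω | x < Y ω} = {ω | Y ω ≤ x}ᶜ := by ext ω; simp [not_le]
    rw [this, prob_compl_eq_one_sub (mle x),
      ENNReal.toReal_sub_of_le prob_le_one ENNReal.one_ne_top, ← hF]
    simp
  -- derivative of the integral part
  have hG : ∀ θ : ℝ, HasDerivAt (fun t => ∫ ω, max (Y ω - t) 0 ∂μ)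
      (∫ ω, (if θ < Y ω then (-1:ℝ) else 0) ∂μ) θ := by
    intro θ
    have key := hasDerivAt_integral_of_dominated_loc_of_lip
      (F := fun t ω => max (Y ω - t) 0)
      (F' := fun ω => if θ < Y ω then (-1:ℝ) else 0)
      (x₀ := θ) (bound := fun _ => (1:ℝ)) (μ := μ) (s := Metric.ball θ 1) (Metric.ball_mem_nhds θ one_pos)
      ?_ ?_ ?_ ?_ ?_ ?_
    · exact key.2
    · filter_upwards with t
      exact ((hYmeas.sub measurable_const).max measurable_const).aestronglyMeasurable
    · exact (hYint.sub (integrable_const θ)).sup (integrable_const 0)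
    · exact (Measurable.ite (mgt θ) measurable_const measurable_const).aestronglyMeasurable
    · filter_upwards with ω
      have : LipschitzWith 1 fun t => max (Y ω - t) 0 := by
        have h1 : LipschitzWith 1 fun t : ℝ => Y ω - t :=
          LipschitzWith.of_dist_le_mul fun a b => by
            simp only [Real.dist_eq, NNReal.coe_one, one_mul]
            rw [show Y ω - a - (Y ω - b) = b - a by ring]
            exact (abs_sub_comm b a).le
        simpa using h1.max_const 0
      simpa using this.lipschitzOnWith (s := Metric.ball θ 1)
    · exact integrable_const 1
    · have : ∀ᵐ ω ∂μ, Y ω ≠ θ := by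
        have := hpt θ
        rw [ae_iff]; simpa using this
      filter_upwards [this] with ω hω
      rcases lt_or_gt_of_ne hω with h | h
      · -- Y ω < θ : function is 0 near θ
        have : (fun t => max (Y ω - t) 0) =ᶠ[𝓝 θ] fun _ => (0:ℝ) := by
          filter_upwards [Ioi_mem_nhds h] with t ht
          exact max_eq_right (by simp only [mem_Ioi] at ht; linarith)
        rw [if_neg (not_lt.2 h.le)]
        exact (hasDerivAt_const θ (0:ℝ)).congr_of_eventuallyEq this
      · -- Y ω > θ
        have : (fun t => max (Y ω - t) 0) =ᶠ[𝓝 θ] fun t => Y ω - t := by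
          filter_upwards [Iio_mem_nhds h] with t ht
          exact max_eq_left (by simp only [mem_Iio] at ht; linarith)
        rw [if_pos h]
        have hd : HasDerivAt (fun t : ℝ => Y ω - t) (-1) θ := by
          simpa using (hasDerivAt_id θ).const_sub (Y ω)
        exact hd.congr_of_eventuallyEq this
  -- value of ∫ F'
  have hGval : ∀ θ : ℝ, (∫ ω, (if θ < Y ω then (-1:ℝ) else 0) ∂μ)
      = -(μ {ω | θ ≤ Y ω}).toReal := by
    intro θ
    have : (fun ω => (if θ < Y ω then (-1:ℝ) else 0))
        = fun ω => -({ω | θ < Y ω}.indicator (fun _ => (1:ℝ)) ω) := by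
      funext ω
      by_cases h : θ < Y ω <;> simp [indicator, h]
    rw [this, integral_neg, integral_indicator_const (1:ℝ) (mgt θ)]
    simp [hgt, hge]
    rw [measureReal_def, hgt]; ring
  have hderiv : ∀ θ, HasDerivAt V (1 - (1 - α)⁻¹ * (μ {ω | θ ≤ Y ω}).toReal) θ := by
    intro θ
    have h1 : HasDerivAt (fun t => t + (1 - α)⁻¹ * ∫ ω, max (Y ω - t) 0 ∂μ)
        (1 + (1 - α)⁻¹ * (-(μ {ω | θ ≤ Y ω}).toReal)) θ := by
      have := (hG θ).const_mul ((1 - α)⁻¹)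
      rw [hGval] at this
      exact (hasDerivAt_id θ).add this
    have : V = fun t => t + (1 - α)⁻¹ * ∫ ω, max (Y ω - t) 0 ∂μ := funext hV
    rw [this]
    convert h1 using 1; ring
  refine ⟨hderiv, ?_, ?_⟩
  · -- part 2
    intro θ
    have hind : (fun ω => H θ (Y ω))
        = fun ω => 1 - (1 - α)⁻¹ * ({ω | θ ≤ Y ω}.indicator (fun _ => (1:ℝ)) ω) := by
      funext ω
      rw [hH]
      by_cases h : θ ≤ Y ω <;> simp [indicator, h]
    rw [hind, integral_sub (integrable_const 1)
      (((integrable_const (1:ℝ)).indicator (mge θ)).const_mul _),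
      integral_const_mul, integral_indicator_const (1:ℝ) (mge θ)]
    simp [measureReal_def]
  -- θstar facts
  have hFtop : Tendsto F atTop (𝓝 1) := by
    have hmono : Monotone (fun x : ℝ => {ω | Y ω ≤ x}) := fun a b hab ω h => le_trans h hab
    have hU : (⋃ x : ℝ, {ω | Y ω ≤ x}) = univ :=
      eq_univ_of_forall fun ω => mem_iUnion.2 ⟨Y ω, by simp⟩
    have h1 : Tendsto (fun x : ℝ => μ {ω | Y ω ≤ x}) atTop (𝓝 (μ univ)) := by
      have := tendsto_measure_iUnion_atTop (μ := μ) hmono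
      rwa [hU] at this
    have h2 := (ENNReal.tendsto_toReal (measure_ne_top μ univ)).comp h1
    simp only [measure_univ, ENNReal.toReal_one] at h2
    refine h2.congr fun x => (hF x).symm
  have hFbot : Tendsto F atBot (𝓝 0) := by
    have hmono : Monotone (fun x : ℝ => {ω | Y ω ≤ x}) := fun a b hab ω h => le_trans h hab
    have hI : (⋂ x : ℝ, {ω | Y ω ≤ x}) = ∅ := by
      ext ω
      simp only [mem_iInter, mem_setOf_eq, mem_empty_iff_false, iff_false, not_forall]
      exact ⟨Y ω - 1, by linarith⟩
    have h1 : Tendsto (fun x : ℝ => μ {ω | Y ω ≤ x}) atBot (𝓝 (μ (∅ : Set Ω))) := by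
      have := tendsto_measure_iInter_atBot (μ := μ)
        (fun x => (mle x).nullMeasurableSet) hmono ⟨0, measure_ne_top _ _⟩
      rwa [hI] at this
    have h2 := (ENNReal.tendsto_toReal (by simp : μ (∅ : Set Ω) ≠ ⊤)).comp h1
    simp only [measure_empty, ENNReal.toReal_zero] at h2
    refine h2.congr fun x => (hF x).symm
  obtain ⟨b, hb⟩ : ∃ b, α ≤ F b := (hFtop.eventually (eventually_ge_nhds hα1)).exists
  obtain ⟨a, ha⟩ : ∃ a, F a ≤ α := (hFbot.eventually (eventually_le_nhds hα0)).exists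
  have hab : a ≤ b := hFmono.le_iff_le.1 (ha.trans hb)
  obtain ⟨θ₀, -, hθ₀⟩ : ∃ θ₀ ∈ Set.Icc a b, F θ₀ = α :=
    intermediate_value_Icc hab hFcont.continuousOn ⟨ha, hb⟩
  have hset : {θ : ℝ | α ≤ F θ} = Set.Ici θ₀ := by
    ext θ
    simp only [mem_setOf_eq, mem_Ici, ← hθ₀]
    exact hFmono.le_iff_le
  have hθstar : θstar = θ₀ := by rw [hθstar, hset, csInf_Ici]
  have hFθstar : F θstar = α := by rw [hθstar]; exact hθ₀
  -- minimization
  have hD : ∀ θ, deriv V θ = 1 - (1 - α)⁻¹ * (1 - F θ) := by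
    intro θ
    rw [(hderiv θ).deriv, hge]
  have hcont : Continuous V := by
    have : Differentiable ℝ V := fun θ => (hderiv θ).differentiableAt
    exact this.continuous
  have hpos : ∀ x, θstar < x → 0 < deriv V x := by
    intro x hx
    rw [hD]
    have hFx : α < F x := by rw [← hFθstar]; exact hFmono hx
    have h1 : (1 - α)⁻¹ * (1 - F x) < (1 - α)⁻¹ * (1 - α) :=
      (mul_lt_mul_iff_right₀ hc).2 (by linarith)
    rw [inv_mul_cancel₀ (by linarith : (1:ℝ) - α ≠ 0)] at h1
    linarith
  have hneg : ∀ x, x < θstar → deriv V x < 0 := by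
    intro x hx
    rw [hD]
    have hFx : F x < α := by rw [← hFθstar]; exact hFmono hx
    have h1 : (1 - α)⁻¹ * (1 - α) < (1 - α)⁻¹ * (1 - F x) :=
      (mul_lt_mul_iff_right₀ hc).2 (by linarith)
    rw [inv_mul_cancel₀ (by linarith : (1:ℝ) - α ≠ 0)] at h1
    linarith
  have hmin : ∀ θ, θ ≠ θstar → V θstar < V θ := by
    intro θ hne
    rcases lt_or_gt_of_ne hne with h | h
    · have hanti : StrictAntiOn V (Set.Icc θ θstar) := by
        apply strictAntiOn_of_deriv_neg (convex_Icc θ θstar) hcont.continuousOn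
        intro x hx
        rw [interior_Icc] at hx
        exact hneg x hx.2
      exact hanti ⟨le_rfl, h.le⟩ ⟨h.le, le_rfl⟩ h
    · have hmono2 : StrictMonoOn V (Set.Icc θstar θ) := by
        apply strictMonoOn_of_deriv_pos (convex_Icc θstar θ) hcont.continuousOn
        intro x hx
        rw [interior_Icc] at hx
        exact hpos x hx.1
      exact hmono2 ⟨le_rfl, h.le⟩ ⟨h.le, le_rfl⟩ h
  refine ⟨hFθstar, fun θ hθ => hFmono.injective (by rw [hθ, hFθstar]),
    fun θ => ?_, fun θ hθ => ?_⟩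
  · rcases eq_or_ne θ θstar with h | h
    · exact le_of_eq (by rw [h])
    · exact (hmin θ h).le
  · by_contra h
    exact absurd hθ (ne_of_gt (hmin θ h))
end
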